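/- The vertex boundary of a minimal subgraph of ℤ² cannot contain an isolated geodesic path of length at least 3, i.e. a path x₀∼x₁∼⋯∼x_k with k≥3 whose interior vertices x₁,…,x_{k−1} all have degree 2 in M and whose length equals the graph distance between its endpoints. -/

import Mathlib

open Set

/-- Vertices of the integer lattice `ℤⁿ`. -/
abbrev Vtx (n : ℕ) := Fin n → ℤ

/-- Adjacency in the integer lattice: Euclidean (equivalently ℓ¹) distance one. -/
def ZAdj {n : ℕ} (x y : Vtx n) : Prop := (∑ i, (x i - y i).natAbs) = 1

/-- Exterior vertex boundary. -/
def extB {n : ℕ} (Ω : Set (Vtx n)) : Set (Vtx n) := {z | z ∉ Ω ∧ ∃ w ∈ Ω, ZAdj z w}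

/-- Closure `Ω̄ = Ω ∪ τΩ`. -/
def clos {n : ℕ} (Ω : Set (Vtx n)) : Set (Vtx n) := Ω ∪ extB Ω

/-- Directed version of `E_Ω = E(Ω, Ω̄)`. -/
def dirE {n : ℕ} (Ω : Set (Vtx n)) : Set (Vtx n × Vtx n) :=
  {p | ZAdj p.1 p.2 ∧ p.1 ∈ clos Ω ∧ p.2 ∈ clos Ω ∧ (p.1 ∈ Ω ∨ p.2 ∈ Ω)}

/-- Directed edge boundary of `F`; each undirected boundary edge is counted once. -/
def dirBdry {n : ℕ} (F : Set (Vtx n)) : Set (Vtx n × Vtx n) :=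
  {p | ZAdj p.1 p.2 ∧ p.1 ∈ F ∧ p.2 ∉ F}

/-- `M ⊆ ℤⁿ` is a minimal (area-minimizing) subgraph. -/
def IsMinimal {n : ℕ} (M : Set (Vtx n)) : Prop :=
  ∀ Ω : Set (Vtx n), Ω.Finite → ∀ F : Set (Vtx n), symmDiff F M ⊆ Ω →
    (dirBdry M ∩ dirE Ω).ncard ≤ (dirBdry F ∩ dirE Ω).ncard

/-- Vertex boundary `δM`. -/
def vB {n : ℕ} (M : Set (Vtx n)) : Set (Vtx n) := {x | x ∈ M ∧ ∃ y, y ∉ M ∧ ZAdj x y}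

/-- Degree of `x` in the subgraph induced on `M`. -/
noncomputable def degIn {n : ℕ} (M : Set (Vtx n)) (x : Vtx n) : ℕ :=
  ({y | y ∈ M ∧ ZAdj x y}).ncard

/-- Combinatorial (graph) distance in `ℤⁿ`, which equals the ℓ¹ distance. -/
def latDist {n : ℕ} (x y : Vtx n) : ℕ := ∑ i, (x i - y i).natAbs

/-- The ∞-normed ball `B̂_r(x)`. -/
def Bhat {n : ℕ} (x : Vtx n) (r : ℕ) : Set (Vtx n) := {y | ∀ i, (y i - x i).natAbs ≤ r}

/-- The set of vertices of `M` lying in some unit `n`-cube all of whose vertices are in `M`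
(the vertices of the `n`-skeleton `Mⁿ`). -/
def skel {n : ℕ} (M : Set (Vtx n)) : Set (Vtx n) :=
  {x | x ∈ M ∧ ∃ v : Vtx n, (∀ i, x i = v i ∨ x i = v i + 1) ∧
    ∀ y : Vtx n, (∀ i, y i = v i ∨ y i = v i + 1) → y ∈ M}

lemma zadj_symm {n : ℕ} {x y : Vtx n} (h : ZAdj x y) : ZAdj y x := by
  unfold ZAdj at *
  rw [← h]
  refine Finset.sum_congr rfl fun i _ => ?_
  omega

lemma latDist_triangle {n : ℕ} (x y z : Vtx n) :
    latDist x z ≤ latDist x y + latDist y z := by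
  unfold latDist
  rw [← Finset.sum_add_distrib]
  refine Finset.sum_le_sum fun i _ => ?_
  have h : x i - z i = (x i - y i) + (y i - z i) := by ring
  rw [h]
  exact Int.natAbs_add_le _ _

lemma latDist_self {n : ℕ} (x : Vtx n) : latDist x x = 0 := by simp [latDist]

lemma vtx2_ext {a b : Vtx 2} (h0 : a 0 = b 0) (h1 : a 1 = b 1) : a = b := by
  funext i
  fin_cases i
  · exact h0
  · exact h1

lemma zadj_iff (c y : Vtx 2) : ZAdj c y ↔
    y = c + ![1, 0] ∨ y = c - ![1, 0] ∨ y = c + ![0, 1] ∨ y = c - ![0, 1] := by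
  constructor
  · intro h
    simp only [ZAdj, Fin.sum_univ_two] at h
    have h' : (c 0 - y 0 = 0 ∧ (c 1 - y 1 = 1 ∨ c 1 - y 1 = -1)) ∨
        ((c 0 - y 0 = 1 ∨ c 0 - y 0 = -1) ∧ c 1 - y 1 = 0) := by omega
    rcases h' with ⟨h0, h1 | h1⟩ | ⟨h0 | h0, h1⟩
    · right; right; right
      exact vtx2_ext
        (by simp only [Pi.sub_apply, Matrix.cons_val_zero]; omega)
        (by simp only [Pi.sub_apply, Matrix.cons_val_one, Matrix.head_cons, Matrix.cons_val_zero]; omega)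
    · right; right; left
      exact vtx2_ext
        (by simp only [Pi.add_apply, Matrix.cons_val_zero]; omega)
        (by simp only [Pi.add_apply, Matrix.cons_val_one, Matrix.head_cons, Matrix.cons_val_zero]; omega)
    · right; left
      exact vtx2_ext
        (by simp only [Pi.sub_apply, Matrix.cons_val_zero]; omega)
        (by simp only [Pi.sub_apply, Matrix.cons_val_one, Matrix.head_cons, Matrix.cons_val_zero]; omega)
    · left
      exact vtx2_ext
        (by simp only [Pi.add_apply, Matrix.cons_val_zero]; omega)
        (by simp only [Pi.add_apply, Matrix.cons_val_one, Matrix.head_cons, Matrix.cons_val_zero]; omega)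
  · rintro (rfl | rfl | rfl | rfl) <;>
      simp only [ZAdj, Fin.sum_univ_two, Pi.add_apply, Pi.sub_apply,
        Matrix.cons_val_zero, Matrix.cons_val_one, Matrix.head_cons] <;> omega

lemma nbr_set (c : Vtx 2) : {y | ZAdj c y} =
    {c + ![1, 0], c - ![1, 0], c + ![0, 1], c - ![0, 1]} := by
  ext y
  rw [Set.mem_setOf_eq, zadj_iff]
  simp [Set.mem_insert_iff]

lemma vne {a b : Vtx 2} (i : Fin 2) (h : a i ≠ b i) : a ≠ b := fun he => h (congrFun he i)

lemma nbr_ncard (c : Vtx 2) : ({y | ZAdj c y}).ncard = 4 := by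
  rw [nbr_set]
  have e0 : (c + ![1, 0] : Vtx 2) 0 = c 0 + 1 := by simp
  have e1 : (c - ![1, 0] : Vtx 2) 0 = c 0 - 1 := by simp
  have e2 : (c + ![0, 1] : Vtx 2) 0 = c 0 := by simp
  have e3 : (c - ![0, 1] : Vtx 2) 0 = c 0 := by simp
  have f2 : (c + ![0, 1] : Vtx 2) 1 = c 1 + 1 := by simp
  have f3 : (c - ![0, 1] : Vtx 2) 1 = c 1 - 1 := by simp
  rw [Set.ncard_insert_of_notMem, Set.ncard_insert_of_notMem, Set.ncard_pair]
  · exact vne 1 (by rw [f2, f3]; omega)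
  · simp only [Set.mem_insert_iff, Set.mem_singleton_iff]
    push_neg
    exact ⟨vne 0 (by rw [e1, e2]; omega), vne 0 (by rw [e1, e3]; omega)⟩
  · simp only [Set.mem_insert_iff, Set.mem_singleton_iff]
    push_neg
    exact ⟨vne 0 (by rw [e0, e1]; omega), vne 0 (by rw [e0, e2]; omega),
      vne 0 (by rw [e0, e3]; omega)⟩

lemma nbr_finite (c : Vtx 2) : ({y | ZAdj c y}).Finite := by
  rw [nbr_set]; exact Set.toFinite _

lemma deg_two_nbrs {M : Set (Vtx 2)} {c a b : Vtx 2} (h2 : degIn M c = 2)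
    (ha : a ∈ M) (hb : b ∈ M) (hca : ZAdj c a) (hcb : ZAdj c b) (hab : a ≠ b) :
    {y | y ∈ M ∧ ZAdj c y} = {a, b} := by
  unfold degIn at h2
  obtain ⟨u, v, huv, hset⟩ := Set.ncard_eq_two.mp h2
  have haM : a ∈ ({u, v} : Set (Vtx 2)) := hset ▸ (⟨ha, hca⟩ : a ∈ {y | y ∈ M ∧ ZAdj c y})
  have hbM : b ∈ ({u, v} : Set (Vtx 2)) := hset ▸ (⟨hb, hcb⟩ : b ∈ {y | y ∈ M ∧ ZAdj c y})
  simp only [Set.mem_insert_iff, Set.mem_singleton_iff] at haM hbM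
  rcases haM with rfl | rfl <;> rcases hbM with rfl | rfl
  · exact absurd rfl hab
  · exact hset
  · rw [hset, Set.pair_comm]
  · exact absurd rfl hab

lemma two_out {M : Set (Vtx 2)} {c a b : Vtx 2}
    (hT : {y | y ∈ M ∧ ZAdj c y} = {a, b}) (hab : a ≠ b) :
    ∃ u v, u ≠ v ∧ ZAdj c u ∧ ZAdj c v ∧ u ∉ M ∧ v ∉ M := by
  have hTsub : ({a, b} : Set (Vtx 2)) ⊆ {y | ZAdj c y} := by
    rw [← hT]; rintro y ⟨_, hy⟩; exact hy
  have hdiff : ({y | ZAdj c y} \ {a, b}).ncard = 2 := by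
    rw [Set.ncard_diff hTsub, nbr_ncard, Set.ncard_pair hab]
  obtain ⟨u, v, huv, heq⟩ := Set.ncard_eq_two.mp hdiff
  have hu : u ∈ {y | ZAdj c y} \ ({a, b} : Set (Vtx 2)) := by rw [heq]; exact Set.mem_insert _ _
  have hv : v ∈ {y | ZAdj c y} \ ({a, b} : Set (Vtx 2)) := by
    rw [heq]; exact Set.mem_insert_of_mem _ rfl
  refine ⟨u, v, huv, hu.1, hv.1, ?_, ?_⟩
  · intro huM
    exact hu.2 (hT ▸ (⟨huM, hu.1⟩ : u ∈ {y | y ∈ M ∧ ZAdj c y}))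
  · intro hvM
    exact hv.2 (hT ▸ (⟨hvM, hv.1⟩ : v ∈ {y | y ∈ M ∧ ZAdj c y}))

/-- the boundary of a minimal subgraph of `ℤ²` contains no isolated geodesic
path of length `≥ 3` (all interior vertices of degree 2 in `M`, and length equal to the
combinatorial distance between the endpoints). -/
theorem no_isolated_geodesic_path {M : Set (Vtx 2)} (hM : IsMinimal M)
    (k : ℕ) (hk : 3 ≤ k) (x : Fin (k + 1) → Vtx 2)
    (hbd : ∀ i, x i ∈ vB M)
    (hadj : ∀ i : Fin k, ZAdj (x i.castSucc) (x i.succ))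
    (hiso : ∀ i : Fin (k + 1), 0 < (i : ℕ) → (i : ℕ) < k → degIn M (x i) = 2)
    (hgeo : latDist (x 0) (x (Fin.last k)) = k) : False := by
  -- step adjacency in ℕ-indexed form
  have adjn : ∀ a : ℕ, ∀ h : a < k,
      ZAdj (x ⟨a, by omega⟩) (x ⟨a + 1, by omega⟩) := by
    intro a h
    have h1 := hadj ⟨a, h⟩
    rwa [Fin.castSucc_mk, Fin.succ_mk] at h1
  -- distance along the path
  have key : ∀ b : ℕ, ∀ _ : b ≤ k, ∀ a : ℕ, ∀ _ : a ≤ b,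
      latDist (x ⟨a, by omega⟩) (x ⟨b, by omega⟩) ≤ b - a := by
    intro b
    induction b with
    | zero =>
      intro _ a ha
      have : a = 0 := by omega
      subst this
      simp [latDist_self]
    | succ b ih =>
      intro hb a ha
      rcases Nat.eq_or_lt_of_le ha with rfl | hlt
      · simp [latDist_self]
      · have ha' : a ≤ b := by omega
        have t1 := latDist_triangle (x ⟨a, by omega⟩) (x ⟨b, by omega⟩) (x ⟨b + 1, by omega⟩)
        have t2 := ih (by omega) a ha'
        have t3 : latDist (x ⟨b, by omega⟩) (x ⟨b + 1, by omega⟩) = 1 := adjn b (by omega)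
        omega
  -- injectivity
  have hinj : ∀ a b : ℕ, ∀ _ : a < b, ∀ _ : b ≤ k,
      x ⟨a, by omega⟩ ≠ x ⟨b, by omega⟩ := by
    intro a b hab hbk heq
    have h0 : (0 : Fin (k + 1)) = ⟨0, by omega⟩ := Fin.ext (by simp)
    have t1 := latDist_triangle (x ⟨0, by omega⟩) (x ⟨a, by omega⟩) (x ⟨k, by omega⟩)
    have t2 := latDist_triangle (x ⟨a, by omega⟩) (x ⟨b, by omega⟩) (x ⟨k, by omega⟩)
    have k1 := key a (by omega) 0 (by omega)
    have k2 := key k (le_refl k) b (by omega)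
    have k3 : latDist (x ⟨a, by omega⟩) (x ⟨b, by omega⟩) = 0 :=
      (congrArg (fun z => latDist z (x ⟨b, by omega⟩)) heq).trans (latDist_self _)
    have hgeo' : latDist (x ⟨0, by omega⟩) (x ⟨k, by omega⟩) = k := by
      rw [h0] at hgeo; exact hgeo
    omega
  -- named vertices
  set X0 : Vtx 2 := x ⟨0, by omega⟩ with hX0
  set X1 : Vtx 2 := x ⟨1, by omega⟩ with hX1
  set X2 : Vtx 2 := x ⟨2, by omega⟩ with hX2
  set X3 : Vtx 2 := x ⟨3, by omega⟩ with hX3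
  have hM0 : X0 ∈ M := (hbd ⟨0, by omega⟩).1
  have hM1 : X1 ∈ M := (hbd ⟨1, by omega⟩).1
  have hM2 : X2 ∈ M := (hbd ⟨2, by omega⟩).1
  have hM3 : X3 ∈ M := (hbd ⟨3, by omega⟩).1
  have adj01 : ZAdj X0 X1 := adjn 0 (by omega)
  have adj12 : ZAdj X1 X2 := adjn 1 (by omega)
  have adj23 : ZAdj X2 X3 := adjn 2 (by omega)
  have ne02 : X0 ≠ X2 := hinj 0 2 (by omega) (by omega)
  have ne13 : X1 ≠ X3 := hinj 1 3 (by omega) (by omega)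
  have ne12 : X1 ≠ X2 := hinj 1 2 (by omega) (by omega)
  have hd1 : degIn M X1 = 2 := hiso ⟨1, by omega⟩ (by simp) (by simp; omega)
  have hd2 : degIn M X2 = 2 := hiso ⟨2, by omega⟩ (by simp) (by simp; omega)
  have hT1 : {y | y ∈ M ∧ ZAdj X1 y} = {X0, X2} :=
    deg_two_nbrs hd1 hM0 hM2 (zadj_symm adj01) adj12 ne02
  have hT2 : {y | y ∈ M ∧ ZAdj X2 y} = {X1, X3} :=
    deg_two_nbrs hd2 hM1 hM3 (zadj_symm adj12) adj23 ne13
  obtain ⟨u, v, huv, hcu, hcv, huM, hvM⟩ := two_out hT1 ne02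
  obtain ⟨-, y2, hy2M, hy2adj⟩ := hbd ⟨2, by omega⟩
  -- the test pair (Ω, F)
  set Ω : Set (Vtx 2) := {X1, X2} with hΩ
  set F : Set (Vtx 2) := M \ Ω with hF
  have hX1Ω : X1 ∈ Ω := Set.mem_insert _ _
  have hX2Ω : X2 ∈ Ω := Set.mem_insert_of_mem _ rfl
  have hΩM : Ω ⊆ M := by
    rintro z (rfl | rfl)
    · exact hM1
    · exact hM2
  have hΩfin : Ω.Finite := Set.toFinite _
  have hFsym : symmDiff F M ⊆ Ω := by
    intro z hz
    rw [Set.mem_symmDiff] at hz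
    rcases hz with ⟨hzF, hzM⟩ | ⟨hzM, hzF⟩
    · exact absurd hzF.1 hzM
    · by_contra hzΩ
      exact hzF ⟨hzM, hzΩ⟩
  -- finiteness of the relevant edge sets
  have hclosfin : (clos Ω).Finite := by
    have hsub : clos Ω ⊆ Ω ∪ ({y | ZAdj X1 y} ∪ {y | ZAdj X2 y}) := by
      rintro z (hz | ⟨hzΩ, w, hwΩ, hzw⟩)
      · exact Or.inl hz
      · rcases hwΩ with rfl | rfl
        · exact Or.inr (Or.inl (zadj_symm hzw))
        · exact Or.inr (Or.inr (zadj_symm hzw))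
    exact Set.Finite.subset (hΩfin.union ((nbr_finite X1).union (nbr_finite X2))) hsub
  have hdirEfin : (dirE Ω).Finite := by
    have hsub : dirE Ω ⊆ clos Ω ×ˢ clos Ω := fun p hp => ⟨hp.2.1, hp.2.2.1⟩
    exact Set.Finite.subset (hclosfin.prod hclosfin) hsub
  have hbigfin : (dirBdry M ∩ dirE Ω).Finite :=
    hdirEfin.subset (Set.inter_subset_right)
  -- out-neighbours are not in Ω
  have hout : ∀ w : Vtx 2, w ∉ M → w ∉ Ω := fun w hw hwΩ => hw (hΩM hwΩ)
  have hclos1 : X1 ∈ clos Ω := Or.inl hX1Ω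
  have hclos2 : X2 ∈ clos Ω := Or.inl hX2Ω
  have hclosout : ∀ w : Vtx 2, w ∉ M → ∀ c, c ∈ Ω → ZAdj c w → w ∈ clos Ω :=
    fun w hw c hc hcw => Or.inr ⟨hout w hw, c, hc, zadj_symm hcw⟩
  -- lower bound: three boundary edges of M
  set S : Set (Vtx 2 × Vtx 2) := {(X1, u), (X1, v), (X2, y2)} with hS
  have hSsub : S ⊆ dirBdry M ∩ dirE Ω := by
    rintro p (rfl | rfl | rfl)
    · exact ⟨⟨hcu, hM1, huM⟩, hcu, hclos1, hclosout u huM X1 hX1Ω hcu, Or.inl hX1Ω⟩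
    · exact ⟨⟨hcv, hM1, hvM⟩, hcv, hclos1, hclosout v hvM X1 hX1Ω hcv, Or.inl hX1Ω⟩
    · exact ⟨⟨hy2adj, hM2, hy2M⟩, hy2adj, hclos2, hclosout y2 hy2M X2 hX2Ω hy2adj,
        Or.inl hX2Ω⟩
  have hS3 : S.ncard = 3 := by
    rw [hS, Set.ncard_insert_of_notMem, Set.ncard_insert_of_notMem, Set.ncard_singleton]
    · intro hmem
      rw [Set.mem_singleton_iff, Prod.mk.injEq] at hmem
      exact ne12 hmem.1
    · intro hmem
      simp only [Set.mem_insert_iff, Set.mem_singleton_iff, Prod.mk.injEq] at hmem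
      rcases hmem with ⟨-, h⟩ | ⟨h, -⟩
      · exact huv h
      · exact ne12 h
  have hlow : 3 ≤ (dirBdry M ∩ dirE Ω).ncard := by
    rw [← hS3]
    exact Set.ncard_le_ncard hSsub hbigfin
  -- upper bound: at most two boundary edges of F
  have hsubU : dirBdry F ∩ dirE Ω ⊆ {(X0, X1), (X3, X2)} := by
    rintro ⟨p1, p2⟩ ⟨⟨hadjp, hp1F, hp2F⟩, -, -, -, hor⟩
    rcases hor with hp1Ω | hp2Ω
    · exact absurd hp1Ω hp1F.2
    · rcases hp2Ω with rfl | rfl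
      · have : p1 ∈ {y | y ∈ M ∧ ZAdj X1 y} := ⟨hp1F.1, zadj_symm hadjp⟩
        rw [hT1] at this
        rcases this with rfl | rfl
        · exact Or.inl rfl
        · exact absurd hX2Ω hp1F.2
      · have : p1 ∈ {y | y ∈ M ∧ ZAdj X2 y} := ⟨hp1F.1, zadj_symm hadjp⟩
        rw [hT2] at this
        rcases this with rfl | rfl
        · exact absurd hX1Ω hp1F.2
        · exact Or.inr rfl
  have hup : (dirBdry F ∩ dirE Ω).ncard ≤ 2 := by
    refine le_trans (Set.ncard_le_ncard hsubU (Set.toFinite _)) ?_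
    refine le_trans (Set.ncard_insert_le _ _) ?_
    rw [Set.ncard_singleton]
  have := hM Ω hΩfin F hFsym
  omega
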